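/- arXiv:2209.14838 — 6 statements merged into one kernel-verified Lean document; each statement's English description precedes it below -/
import Mathlib

section
/- In a nonempty compact Hausdorff semigroup S whose multiplication is continuous in the first coordinate, every minimal left ideal contains an idempotent. -/
/-!
Already every left ideal `I` contains an idempotent: for `x ∈ I` the principal left ideal `S * x`
lies in `I`, is compact as the image of `S` under the continuous map `(· * x)`, and is a
subsemigroup, so the Ellis–Numakura lemma gives an idempotent in it.
-/

/-- A left ideal of a multiplicative structure: a nonempty subset closed under
left multiplication by arbitrary elements. -/
def IsLeftIdeal {S : Type*} [Mul S] (I : Set S) : Prop :=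
  I.Nonempty ∧ ∀ s : S, ∀ x ∈ I, s * x ∈ I

/-- A minimal left ideal: a left ideal containing no proper left ideal. -/
def IsMinLeftIdeal {S : Type*} [Mul S] (I : Set S) : Prop :=
  IsLeftIdeal I ∧ ∀ J ⊆ I, IsLeftIdeal J → J = I

/-- A subset that is a group under the ambient multiplication. -/
def IsGroupSet {S : Type*} [Mul S] (I : Set S) : Prop :=
  (∀ x ∈ I, ∀ y ∈ I, x * y ∈ I) ∧
    ∃ u ∈ I, (∀ x ∈ I, u * x = x ∧ x * u = x) ∧
      ∀ x ∈ I, ∃ y ∈ I, x * y = u ∧ y * x = u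

theorem IsLeftIdeal.range_mul_right_subset {S : Type*} [Mul S] {I : Set S} (hI : IsLeftIdeal I)
    {x : S} (hx : x ∈ I) : Set.range (· * x) ⊆ I := by
  rintro _ ⟨s, rfl⟩
  exact hI.2 s x hx

theorem range_mul_right_mul_mem {S : Type*} [Semigroup S] (x : S) :
    ∀ a ∈ Set.range (· * x), ∀ b ∈ Set.range (· * x), a * b ∈ Set.range (· * x) := by
  rintro _ ⟨s, rfl⟩ _ ⟨t, rfl⟩
  exact ⟨s * x * t, mul_assoc _ _ _⟩

theorem IsLeftIdeal.exists_idempotent_mem {S : Type*} [Semigroup S] [TopologicalSpace S]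
    [CompactSpace S] [T2Space S] (hc : ∀ y : S, Continuous fun x => x * y)
    {I : Set S} (hI : IsLeftIdeal I) : ∃ u ∈ I, u * u = u := by
  obtain ⟨x, hx⟩ := hI.1
  obtain ⟨u, hu, hidem⟩ := exists_idempotent_in_compact_subsemigroup hc (Set.range (· * x))
    ⟨x * x, x, rfl⟩ (isCompact_range (hc x)) (range_mul_right_mul_mem x)
  exact ⟨u, hI.range_mul_right_subset hx hu, hidem⟩

theorem minLeftIdeal_exists_idempotent_general {S : Type*} [Semigroup S] [TopologicalSpace S]
    [CompactSpace S] [T2Space S]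
    (hc : ∀ y : S, Continuous fun x => x * y)
    (I : Set S) (hI : IsMinLeftIdeal I) :
    ∃ u ∈ I, u * u = u :=
  hI.1.exists_idempotent_mem hc

/-- In a nonempty compact Hausdorff semigroup whose multiplication is continuous in the
first coordinate, every minimal left ideal contains an idempotent. -/
theorem minLeftIdeal_exists_idempotent {S : Type*} [Semigroup S] [TopologicalSpace S]
    [CompactSpace S] [T2Space S] [Nonempty S]
    (hc : ∀ y : S, Continuous fun x => x * y)
    (I : Set S) (hI : IsMinLeftIdeal I) :
    ∃ u ∈ I, u * u = u :=
  minLeftIdeal_exists_idempotent_general hc I hI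
end

section
/- In a compact Hausdorff left-continuous semigroup S, if I is a minimal left ideal and u ∈ I is an idempotent, then u*I is a group under the semigroup operation, with identity u. -/
/-! For `x` in the minimal left ideal `I` the left ideal `S * x` lies
in `I`, hence equals it, so every element of `I` divides every other on the left; and
`{z ∈ I | z * u = z}` is a left ideal containing `u`, so `u` is a right identity on `I`.
Consequently every element of `u * I` has a left inverse in `u * I`, and a monoid-like set in
which all elements have left inverses is a group. -/

section Semigroup

variable {S : Type*} [Semigroup S]

theorem mul_eq_of_left_inv_of_left_inv {u x y z : S} (hx : u * x = x) (hy : u * y = y)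
    (hyx : y * x = u) (hzy : z * y = u) : x * y = u :=
  calc x * y = z * y * (x * y) := by rw [hzy, ← mul_assoc, hx]
    _ = z * (y * x * y) := by simp only [mul_assoc]
    _ = u := by rw [hyx, hy, hzy]

namespace IsMinLeftIdeal

variable {I : Set S}

theorem mul_idempotent_eq_self (hI : IsMinLeftIdeal I) {u z : S} (hu : u ∈ I)
    (hid : IsIdempotentElem u) (hz : z ∈ I) : z * u = z := by
  have hJ : {z | z ∈ I ∧ z * u = z} = I := by
    refine hI.2 _ (fun _ h => h.1) ⟨⟨u, hu, hid⟩, ?_⟩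
    rintro s z ⟨hzI, hzu⟩
    exact ⟨hI.1.2 s z hzI, by rw [mul_assoc, hzu]⟩
  rw [← hJ] at hz
  exact hz.2

theorem exists_mul_eq (hI : IsMinLeftIdeal I) {x y : S} (hx : x ∈ I) (hy : y ∈ I) :
    ∃ s, s * x = y := by
  have hJ : Set.range (· * x) = I := by
    refine hI.2 _ (Set.range_subset_iff.2 fun s => hI.1.2 s x hx) ⟨⟨x * x, x, rfl⟩, ?_⟩
    rintro s _ ⟨t, rfl⟩
    exact ⟨s * t, mul_assoc s t x⟩
  rw [← hJ] at hy
  exact hy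

theorem exists_left_inv_idempotent_mul (hI : IsMinLeftIdeal I) {u a : S} (hu : u ∈ I)
    (hid : IsIdempotentElem u) (ha : a ∈ I) : ∃ b ∈ I, u * b * (u * a) = u := by
  obtain ⟨s, hs⟩ := hI.exists_mul_eq (hI.1.2 u a ha) hu
  refine ⟨s * u, hI.1.2 s u hu, ?_⟩
  calc u * (s * u) * (u * a) = u * (s * (u * u * a)) := by simp only [mul_assoc]
    _ = u := by rw [hid.eq, hs, hid.eq]

end IsMinLeftIdeal

end Semigroup

theorem idempotent_smul_minLeftIdeal_isGroup_general {S : Type*} [Semigroup S]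
    (I : Set S) (hI : IsMinLeftIdeal I)
    (u : S) (hu : u ∈ I) (hid : u * u = u) :
    ((fun x => u * x) '' I ⊆ I) ∧
    (∀ x ∈ (fun x => u * x) '' I, ∀ y ∈ (fun x => u * x) '' I,
        x * y ∈ (fun x => u * x) '' I) ∧
    u ∈ (fun x => u * x) '' I ∧
    (∀ x ∈ (fun x => u * x) '' I, u * x = x ∧ x * u = x) ∧
    (∀ x ∈ (fun x => u * x) '' I, ∃ y ∈ (fun x => u * x) '' I, x * y = u ∧ y * x = u) := by
  have hmul := hI.1.2
  have hleft : ∀ a, u * (u * a) = u * a := fun a => by rw [← mul_assoc, hid]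
  refine ⟨Set.image_subset_iff.2 fun a ha => hmul u a ha, ?_, ⟨u, hu, hid⟩, ?_, ?_⟩
  · rintro _ ⟨a, ha, rfl⟩ _ ⟨b, hb, rfl⟩
    exact ⟨a * (u * b), hmul a _ (hmul u b hb), (mul_assoc u a (u * b)).symm⟩
  · rintro _ ⟨a, ha, rfl⟩
    exact ⟨hleft a, hI.mul_idempotent_eq_self hu hid (hmul u a ha)⟩
  · rintro _ ⟨a, ha, rfl⟩
    obtain ⟨b, hb, hba⟩ := hI.exists_left_inv_idempotent_mul hu hid ha
    obtain ⟨c, -, hcb⟩ := hI.exists_left_inv_idempotent_mul hu hid hb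
    exact ⟨u * b, ⟨b, hb, rfl⟩,
      mul_eq_of_left_inv_of_left_inv (hleft a) (hleft b) hba hcb, hba⟩

/-- In a compact Hausdorff left-continuous semigroup, if $I$ is a minimal left ideal
(closed, nonempty) and $u ∈ I$ is an idempotent, then $u*I$ is a group under the
semigroup operation with identity $u$. -/
theorem idempotent_smul_minLeftIdeal_isGroup {S : Type*} [Semigroup S] [TopologicalSpace S]
    [CompactSpace S] [T2Space S]
    (hc : ∀ y : S, Continuous fun x => x * y)
    (I : Set S) (hI : IsMinLeftIdeal I) (hIc : IsClosed I)
    (u : S) (hu : u ∈ I) (hid : u * u = u) :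
    ((fun x => u * x) '' I ⊆ I) ∧
    (∀ x ∈ (fun x => u * x) '' I, ∀ y ∈ (fun x => u * x) '' I,
        x * y ∈ (fun x => u * x) '' I) ∧
    u ∈ (fun x => u * x) '' I ∧
    (∀ x ∈ (fun x => u * x) '' I, u * x = x ∧ x * u = x) ∧
    (∀ x ∈ (fun x => u * x) '' I, ∃ y ∈ (fun x => u * x) '' I, x * y = u ∧ y * x = u) :=
  idempotent_smul_minLeftIdeal_isGroup_general I hI u hu hid
end

section
/- Let S be a left-continuous compact semigroup in which some minimal left ideal I is a group with identity element u. Then the map φ : S → I defined by φ(x) = x*u is a semigroup homomorphism, is continuous, and restricts to the identity on I (i.e., φ is a retraction onto I). -/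
theorem IsLeftIdeal.mul_mem {S : Type*} [Mul S] {I : Set S} (hI : IsLeftIdeal I) (s : S)
    {x : S} (hx : x ∈ I) : s * x ∈ I :=
  hI.2 s x hx

theorem mul_mul_right_eq_of_left_id {S : Type*} [Semigroup S] {u : S}
    (h : ∀ y : S, u * (y * u) = y * u) (x y : S) : x * y * u = x * u * (y * u) := by
  rw [mul_assoc, mul_assoc, h]

theorem retraction_onto_group_minLeftIdeal_general {S : Type*} [Semigroup S] [TopologicalSpace S]
    (hc : ∀ y : S, Continuous fun x => x * y)
    (I : Set S) (hI : IsMinLeftIdeal I)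
    (u : S) (hu : u ∈ I) (hid : ∀ x ∈ I, u * x = x ∧ x * u = x) :
    (∀ x y : S, (x * y) * u = (x * u) * (y * u)) ∧
    Continuous (fun x : S => x * u) ∧
    (∀ x : S, x * u ∈ I) ∧
    (∀ x ∈ I, x * u = x) := by
  have hmem : ∀ x : S, x * u ∈ I := fun x => hI.1.mul_mem x hu
  exact ⟨mul_mul_right_eq_of_left_id fun y => (hid _ (hmem y)).1, hc u, hmem,
    fun x hx => (hid x hx).2⟩

/-- If a minimal left ideal $I$ of a left-continuous compact semigroup is a group with
identity $u$, then $φ(x) = x*u$ is a continuous semigroup homomorphism of $S$ onto $I$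
restricting to the identity on $I$ (a retraction onto $I$). -/
theorem retraction_onto_group_minLeftIdeal {S : Type*} [Semigroup S] [TopologicalSpace S]
    [CompactSpace S] [T2Space S]
    (hc : ∀ y : S, Continuous fun x => x * y)
    (I : Set S) (hI : IsMinLeftIdeal I) (hgrp : IsGroupSet I)
    (u : S) (hu : u ∈ I) (hid : ∀ x ∈ I, u * x = x ∧ x * u = x) :
    (∀ x y : S, (x * y) * u = (x * u) * (y * u)) ∧
    Continuous (fun x : S => x * u) ∧
    (∀ x : S, x * u ∈ I) ∧
    (∀ x ∈ I, x * u = x) :=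
  retraction_onto_group_minLeftIdeal_general hc I hI u hu hid
end

section
/- Let S be a left-continuous compact semigroup with a unique minimal left ideal I, and let u be an idempotent in I. Then the map ψ : S → S defined by ψ(x) = u*x is a semigroup homomorphism whose image is exactly the group u*I. -/
/-!
Right multiplication by any `x` carries `I` onto a minimal left ideal, which by uniqueness is `I`
again; hence `u * x ∈ I`. An idempotent of a minimal left ideal is a right identity on it, so
`u * x * u = u * x`, which is exactly the homomorphism property, and `u * x = u * (u * x)` puts
every value of `ψ` in `u * I`.
-/

namespace IsMinLeftIdeal

variable {S : Type*} [Semigroup S] {I : Set S}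

theorem forall_of_isLeftIdeal_sep (hI : IsMinLeftIdeal I) {p : S → Prop}
    (hp : IsLeftIdeal {x ∈ I | p x}) : ∀ x ∈ I, p x := by
  intro x hx
  rw [← hI.2 _ (fun _ hy => hy.1) hp] at hx
  exact hx.2

theorem mul_right_eq_self_of_isIdempotentElem (hI : IsMinLeftIdeal I) {u : S} (hu : u ∈ I)
    (hid : IsIdempotentElem u) :
    ∀ z ∈ I, z * u = z :=
  hI.forall_of_isLeftIdeal_sep
    ⟨⟨u, hu, hid⟩, fun s _ hx => ⟨hI.1.2 s _ hx.1, by rw [mul_assoc, hx.2]⟩⟩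

theorem image_mul_right (hI : IsMinLeftIdeal I) (x : S) :
    IsMinLeftIdeal ((· * x) '' I) := by
  obtain ⟨⟨i, hi⟩, hcl⟩ := hI.1
  refine ⟨⟨⟨i * x, i, hi, rfl⟩, ?_⟩, ?_⟩
  · rintro s _ ⟨z, hz, rfl⟩
    exact ⟨s * z, hcl s z hz, mul_assoc s z x⟩
  · rintro J hJI hJ
    obtain ⟨j, hj⟩ := hJ.1
    obtain ⟨z₀, hz₀, rfl⟩ := hJI hj
    -- The preimage of `J` under `(· * x)` is a left ideal inside `I`, hence all of `I`.
    have hpre : ∀ z ∈ I, z * x ∈ J := hI.forall_of_isLeftIdeal_sep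
      ⟨⟨z₀, hz₀, hj⟩, fun s w hw => ⟨hcl s w hw.1, by rw [mul_assoc]; exact hJ.2 s _ hw.2⟩⟩
    exact hJI.antisymm (Set.image_subset_iff.2 hpre)

end IsMinLeftIdeal

theorem left_mul_idempotent_hom_image_general {S : Type*} [Semigroup S]
    (I : Set S) (hI : IsMinLeftIdeal I) (huniq : ∀ J : Set S, IsMinLeftIdeal J → J = I)
    (u : S) (hu : u ∈ I) (hid : u * u = u) :
    (∀ x y : S, u * (x * y) = (u * x) * (u * y)) ∧
    Set.range (fun x : S => u * x) = (fun x => u * x) '' I := by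
  have hmem : ∀ x : S, u * x ∈ I := fun x =>
    huniq _ (hI.image_mul_right x) ▸ ⟨u, hu, rfl⟩
  have hright : ∀ x : S, u * x * u = u * x := fun x =>
    hI.mul_right_eq_self_of_isIdempotentElem hu hid _ (hmem x)
  refine ⟨fun x y => ?_, ?_⟩
  · rw [← mul_assoc (u * x), hright, mul_assoc]
  · refine (Set.image_subset_range _ _).antisymm' ?_
    rintro _ ⟨x, rfl⟩
    exact ⟨u * x, hmem x, show u * (u * x) = u * x by rw [← mul_assoc, hid]⟩

/-- If $I$ is the unique minimal left ideal of a left-continuous compact semigroup $S$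
and $u ∈ I$ is an idempotent, then $ψ(x) = u*x$ is a semigroup homomorphism of $S$
whose image is exactly the group $u*I$. -/
theorem left_mul_idempotent_hom_image {S : Type*} [Semigroup S] [TopologicalSpace S]
    [CompactSpace S] [T2Space S]
    (hc : ∀ y : S, Continuous fun x => x * y)
    (I : Set S) (hI : IsMinLeftIdeal I) (huniq : ∀ J : Set S, IsMinLeftIdeal J → J = I)
    (u : S) (hu : u ∈ I) (hid : u * u = u) :
    (∀ x y : S, u * (x * y) = (u * x) * (u * y)) ∧
    Set.range (fun x : S => u * x) = (fun x => u * x) '' I :=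
  left_mul_idempotent_hom_image_general I hI huniq u hu hid
end

section
/- Let G be a group, 𝒜 a G-algebra of subsets of G that is d-closed (closed under all maps d_p for ultrafilters p on 𝒜). Define p*q on the Stone space S(𝒜) of ultrafilters by: A ∈ p*q iff d_q(A) ∈ p. Then * is an associative operation on S(𝒜), and d_{p*q} = d_p ∘ d_q. -/
open Set

/-- Left translate of a set: \$gA = \{g·a : a ∈ A\}\$. -/
def trL {G : Type*} [Group G] (g : G) (A : Set G) : Set G := (fun x => g * x) '' A

/-- A \$G\$-algebra: a Boolean algebra of subsets of \$G\$ closed under left translation. -/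
def IsGAlgebra {G : Type*} [Group G] (𝒜 : Set (Set G)) : Prop :=
  ∅ ∈ 𝒜 ∧ (∀ A ∈ 𝒜, Aᶜ ∈ 𝒜) ∧ (∀ A ∈ 𝒜, ∀ B ∈ 𝒜, A ∪ B ∈ 𝒜) ∧
    ∀ g : G, ∀ A ∈ 𝒜, trL g A ∈ 𝒜

/-- An ultrafilter on the Boolean algebra 𝒜 of subsets of \$G\$. -/
def IsUltra {G : Type*} [Group G] (𝒜 p : Set (Set G)) : Prop :=
  p ⊆ 𝒜 ∧ ∅ ∉ p ∧ univ ∈ p ∧ (∀ A ∈ p, ∀ B ∈ p, A ∩ B ∈ p) ∧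
    (∀ A ∈ p, ∀ B ∈ 𝒜, A ⊆ B → B ∈ p) ∧ ∀ A ∈ 𝒜, A ∈ p ∨ Aᶜ ∈ p

/-- The map \$d_p(A) = \{g ∈ G : g⁻¹A ∈ p\}\$. -/
def dmap {G : Type*} [Group G] (p : Set (Set G)) (A : Set G) : Set G :=
  {g : G | trL g⁻¹ A ∈ p}

/-- 𝒜 is d-closed: closed under \$d_p\$ for every ultrafilter \$p\$ on 𝒜. -/
def DClosed {G : Type*} [Group G] (𝒜 : Set (Set G)) : Prop :=
  ∀ p : Set (Set G), IsUltra 𝒜 p → ∀ A ∈ 𝒜, dmap p A ∈ 𝒜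

/-- The semigroup operation on ultrafilters: \$A ∈ p*q\$ iff \$A ∈ 𝒜\$ and \$d_q(A) ∈ p\$. -/
def ustar {G : Type*} [Group G] (𝒜 p q : Set (Set G)) : Set (Set G) :=
  {A | A ∈ 𝒜 ∧ dmap q A ∈ p}

/-! The translation `g⁻¹A` in `dmap` commutes with the Boolean operations, so for an
ultrafilter `q` the map `d_q` is a Boolean-algebra map that commutes with translations;
d-closedness makes it an endomorphism of `𝒜`. Then `p * q`, the pullback of `p` along `d_q`,
is an ultrafilter, `d_{p*q}(A) = {g | d_q(g⁻¹A) ∈ p} = {g | g⁻¹ d_q(A) ∈ p} = d_p(d_q(A))`, and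
associativity is `d_{q*s} = d_q ∘ d_s` read inside `p`. -/

open scoped Pointwise

section

variable {G : Type*} [Group G] {𝒜 p q : Set (Set G)}

lemma mem_dmap {g : G} {A : Set G} : g ∈ dmap p A ↔ g⁻¹ • A ∈ p := Iff.rfl

lemma mem_ustar {A : Set G} : A ∈ ustar 𝒜 p q ↔ A ∈ 𝒜 ∧ dmap q A ∈ p := Iff.rfl

namespace IsGAlgebra

variable (h𝒜 : IsGAlgebra 𝒜)
include h𝒜

lemma compl_mem {A : Set G} (hA : A ∈ 𝒜) : Aᶜ ∈ 𝒜 := h𝒜.2.1 A hA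

lemma smul_mem (g : G) {A : Set G} (hA : A ∈ 𝒜) : g • A ∈ 𝒜 := h𝒜.2.2.2 g A hA

lemma univ_mem : (univ : Set G) ∈ 𝒜 := by
  simpa using h𝒜.compl_mem h𝒜.1

lemma inter_mem {A B : Set G} (hA : A ∈ 𝒜) (hB : B ∈ 𝒜) : A ∩ B ∈ 𝒜 := by
  simpa using h𝒜.compl_mem (h𝒜.2.2.1 _ (h𝒜.compl_mem hA) _ (h𝒜.compl_mem hB))

end IsGAlgebra

namespace IsUltra

lemma empty_notMem (hp : IsUltra 𝒜 p) : (∅ : Set G) ∉ p := hp.2.1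

lemma univ_mem (hp : IsUltra 𝒜 p) : (univ : Set G) ∈ p := hp.2.2.1

lemma inter_mem (hp : IsUltra 𝒜 p) {A B : Set G} (hA : A ∈ p) (hB : B ∈ p) : A ∩ B ∈ p :=
  hp.2.2.2.1 A hA B hB

lemma mem_of_subset (hp : IsUltra 𝒜 p) {A B : Set G} (hA : A ∈ p) (hB : B ∈ 𝒜) (hAB : A ⊆ B) :
    B ∈ p :=
  hp.2.2.2.2.1 A hA B hB hAB

lemma mem_or_compl_mem (hp : IsUltra 𝒜 p) {A : Set G} (hA : A ∈ 𝒜) : A ∈ p ∨ Aᶜ ∈ p :=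
  hp.2.2.2.2.2 A hA

lemma compl_mem_iff (hp : IsUltra 𝒜 p) {A : Set G} (hA : A ∈ 𝒜) : Aᶜ ∈ p ↔ A ∉ p := by
  refine ⟨fun hAc hA' => hp.empty_notMem ?_, (hp.mem_or_compl_mem hA).resolve_left⟩
  simpa using hp.inter_mem hA' hAc

end IsUltra

lemma dmap_smul (q : Set (Set G)) (g : G) (A : Set G) : dmap q (g • A) = g • dmap q A := by
  ext h
  simp only [mem_dmap, Set.mem_smul_set_iff_inv_smul_mem, smul_smul, smul_eq_mul, mul_inv_rev,
    inv_inv]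

lemma dmap_empty (hq : IsUltra 𝒜 q) : dmap q (∅ : Set G) = ∅ := by
  ext g
  simpa [mem_dmap] using hq.empty_notMem

lemma dmap_univ (hq : IsUltra 𝒜 q) : dmap q (univ : Set G) = univ := by
  ext g
  simpa [mem_dmap] using hq.univ_mem

section Ultra

variable (h𝒜 : IsGAlgebra 𝒜) (hq : IsUltra 𝒜 q)
include h𝒜 hq

lemma dmap_inter {A B : Set G} (hA : A ∈ 𝒜) (hB : B ∈ 𝒜) :
    dmap q (A ∩ B) = dmap q A ∩ dmap q B := by
  ext g
  simp only [mem_dmap, Set.smul_set_inter, mem_inter_iff]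
  exact ⟨fun h => ⟨hq.mem_of_subset h (h𝒜.smul_mem _ hA) inter_subset_left,
    hq.mem_of_subset h (h𝒜.smul_mem _ hB) inter_subset_right⟩,
    fun h => hq.inter_mem h.1 h.2⟩

lemma dmap_compl {A : Set G} (hA : A ∈ 𝒜) : dmap q Aᶜ = (dmap q A)ᶜ := by
  ext g
  simp only [mem_dmap, Set.smul_set_compl, mem_compl_iff]
  exact hq.compl_mem_iff (h𝒜.smul_mem _ hA)

lemma dmap_mono {A B : Set G} (hB : B ∈ 𝒜) (hAB : A ⊆ B) : dmap q A ⊆ dmap q B :=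
  fun g hg => hq.mem_of_subset hg (h𝒜.smul_mem _ hB) (smul_set_mono (a := g⁻¹) hAB)

lemma isUltra_ustar (hd : DClosed 𝒜) (hp : IsUltra 𝒜 p) : IsUltra 𝒜 (ustar 𝒜 p q) := by
  refine ⟨fun A hA => hA.1, ?_, ?_, ?_, ?_, ?_⟩
  · rintro ⟨-, h⟩
    exact hp.empty_notMem (dmap_empty hq ▸ h)
  · exact ⟨h𝒜.univ_mem, (dmap_univ hq).symm ▸ hp.univ_mem⟩
  · rintro A ⟨hA, hqA⟩ B ⟨hB, hqB⟩
    exact ⟨h𝒜.inter_mem hA hB, dmap_inter h𝒜 hq hA hB ▸ hp.inter_mem hqA hqB⟩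
  · rintro A ⟨-, hqA⟩ B hB hAB
    exact ⟨hB, hp.mem_of_subset hqA (hd q hq B hB) (dmap_mono h𝒜 hq hB hAB)⟩
  · intro A hA
    refine (hp.mem_or_compl_mem (hd q hq A hA)).imp (fun h => ⟨hA, h⟩) fun h => ?_
    exact ⟨h𝒜.compl_mem hA, (dmap_compl h𝒜 hq hA).symm ▸ h⟩

end Ultra

lemma dmap_ustar (h𝒜 : IsGAlgebra 𝒜) {A : Set G} (hA : A ∈ 𝒜) :
    dmap (ustar 𝒜 p q) A = dmap p (dmap q A) := by
  ext g
  simp only [mem_dmap, mem_ustar, dmap_smul, h𝒜.smul_mem _ hA, true_and]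

lemma ustar_assoc (h𝒜 : IsGAlgebra 𝒜) (hd : DClosed 𝒜) {s : Set (Set G)} (hs : IsUltra 𝒜 s) :
    ustar 𝒜 (ustar 𝒜 p q) s = ustar 𝒜 p (ustar 𝒜 q s) := by
  ext A
  simp only [mem_ustar]
  constructor
  · rintro ⟨hA, -, h⟩
    exact ⟨hA, dmap_ustar h𝒜 hA ▸ h⟩
  · rintro ⟨hA, h⟩
    exact ⟨hA, hd s hs A hA, (dmap_ustar h𝒜 hA).symm ▸ h⟩

end

/-- On the Stone space of a d-closed $G$-algebra, the operation $p*q$ defined by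
$A ∈ p*q ↔ d_q(A) ∈ p$ sends ultrafilters to ultrafilters, is associative, and
satisfies $d_{p*q} = d_p ∘ d_q$. -/
theorem ustar_assoc_and_dmap_comp {G : Type*} [Group G]
    (𝒜 : Set (Set G)) (h𝒜 : IsGAlgebra 𝒜) (hd : DClosed 𝒜)
    (p q s : Set (Set G)) (hp : IsUltra 𝒜 p) (hq : IsUltra 𝒜 q) (hs : IsUltra 𝒜 s) :
    IsUltra 𝒜 (ustar 𝒜 p q) ∧
    (∀ A ∈ 𝒜, dmap (ustar 𝒜 p q) A = dmap p (dmap q A)) ∧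
    ustar 𝒜 (ustar 𝒜 p q) s = ustar 𝒜 p (ustar 𝒜 q s) :=
  ⟨isUltra_ustar h𝒜 hq hd hp, fun _ hA => dmap_ustar h𝒜 hA, ustar_assoc h𝒜 hd hs⟩
end

section
/- Let S be a compact Hausdorff left-continuous semigroup and r : S → T a continuous surjective semigroup homomorphism onto another compact Hausdorff left-continuous semigroup T. If I is a minimal left ideal of T, then there exists a minimal left ideal I' of S such that r(I') = I. -/
/-- If $r : S → T$ is a continuous surjective homomorphism of compact Hausdorff
left-continuous semigroups and $I$ is a minimal left ideal of $T$, then there is a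
minimal left ideal $I'$ of $S$ with $r(I') = I$. -/
theorem minLeftIdeal_lifts {S T : Type*} [Semigroup S] [Semigroup T]
    [TopologicalSpace S] [CompactSpace S] [T2Space S]
    [TopologicalSpace T] [CompactSpace T] [T2Space T] [Nonempty S]
    (hcS : ∀ y : S, Continuous fun x => x * y)
    (hcT : ∀ y : T, Continuous fun x => x * y)
    (r : S → T) (hrsurj : Function.Surjective r) (hrcont : Continuous r)
    (hrhom : ∀ x y : S, r (x * y) = r x * r y)
    (I : Set T) (hI : IsMinLeftIdeal I) :
    ∃ I' : Set S, IsMinLeftIdeal I' ∧ r '' I' = I := by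
  classical
  obtain ⟨t, htI⟩ := hI.1.1
  obtain ⟨s, rfl⟩ := hrsurj t
  -- the closed left ideal S·s
  set K : Set S := Set.range (fun x => x * s) with hK
  have hKcomp : IsCompact K := isCompact_range (hcS s)
  have hKleft : IsLeftIdeal K := by
    refine ⟨⟨Classical.arbitrary S * s, ⟨Classical.arbitrary S, rfl⟩⟩, ?_⟩
    rintro u x ⟨y, rfl⟩
    exact ⟨u * y, mul_assoc u y s⟩
  -- family of closed left ideals inside K
  set F : Set (Set S) := {J | J ⊆ K ∧ IsClosed J ∧ IsLeftIdeal J} with hF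
  have hKF : K ∈ F := ⟨subset_rfl, hKcomp.isClosed, hKleft⟩
  obtain ⟨M, hMK, hMmin⟩ := zorn_superset_nonempty F (by
    intro c hcF hchain hcne
    have : Nonempty c := hcne.to_subtype
    have hdir : DirectedOn (· ⊇ ·) c := by
      intro x hx y hy
      rcases eq_or_ne x y with rfl | hne
      · exact ⟨x, hx, subset_rfl, subset_rfl⟩
      · rcases hchain hx hy hne with h | h
        · exact ⟨x, hx, subset_rfl, h⟩
        · exact ⟨y, hy, h, subset_rfl⟩
    have hne : (⋂₀ c).Nonempty :=
      IsCompact.nonempty_sInter_of_directed_nonempty_isCompact_isClosed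
        hdir
        (fun U hU => (hcF hU).2.2.1)
        (fun U hU => ((hcF hU).2.1).isCompact)
        (fun U hU => (hcF hU).2.1)
    refine ⟨⋂₀ c, ⟨?_, ?_, hne, ?_⟩, fun U hU => Set.sInter_subset_of_mem hU⟩
    · obtain ⟨U, hU⟩ := hcne
      exact (Set.sInter_subset_of_mem hU).trans (hcF hU).1
    · exact isClosed_sInter (fun U hU => (hcF hU).2.1)
    · intro u x hx U hU
      exact (hcF hU).2.2.2 u x (hx U hU)) K hKF
  have hMF : M ∈ F := hMmin.1
  -- M is a minimal left ideal of S
  have hMminIdeal : IsMinLeftIdeal M := by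
    refine ⟨hMF.2.2, ?_⟩
    intro J hJM hJ
    obtain ⟨x, hxJ⟩ := hJ.1
    have hSx_sub_J : Set.range (fun u => u * x) ⊆ J := by
      rintro _ ⟨u, rfl⟩; exact hJ.2 u x hxJ
    have hSxF : Set.range (fun u => u * x) ∈ F := by
      refine ⟨fun z hz => hMF.1 (hJM (hSx_sub_J hz)),
        (isCompact_range (hcS x)).isClosed,
        ⟨Classical.arbitrary S * x, ⟨Classical.arbitrary S, rfl⟩⟩, ?_⟩
      rintro u _ ⟨y, rfl⟩
      exact ⟨u * y, mul_assoc u y x⟩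
    have hMsub : M ⊆ Set.range (fun u => u * x) :=
      hMmin.2 hSxF (hSx_sub_J.trans hJM)
    exact Set.Subset.antisymm hJM (hMsub.trans hSx_sub_J)
  -- r '' M is a left ideal of T contained in I
  have hrM_sub_I : r '' M ⊆ I := by
    rintro _ ⟨m, hm, rfl⟩
    obtain ⟨y, rfl⟩ := hMF.1 hm
    rw [hrhom]
    exact hI.1.2 (r y) (r s) htI
  have hrMideal : IsLeftIdeal (r '' M) := by
    obtain ⟨m, hm⟩ := hMF.2.2.1
    refine ⟨⟨r m, ⟨m, hm, rfl⟩⟩, ?_⟩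
    rintro u _ ⟨m, hm, rfl⟩
    obtain ⟨v, rfl⟩ := hrsurj u
    exact ⟨v * m, hMF.2.2.2 v m hm, hrhom v m⟩
  exact ⟨M, hMminIdeal, hI.2 (r '' M) hrM_sub_I hrMideal⟩
end
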